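/- The empirical plug-in estimator q̂DIₙᴱ = ∫₀¹ (1 − Q̂ₙᴱ(p/2)/Q̂ₙᴱ(1 − p/2)) dp of the quantile D index converges almost surely to qDI(Q) as n → ∞ (i.e., it is a strongly consistent estimator of qDI(Q)). -/

import Mathlib

open MeasureTheory Filter Set
open scoped Topology

/-- The (generalized inverse) quantile function of `F`: `Q(p) = inf {t : F t ≥ p}`. -/
noncomputable def quantile (F : ℝ → ℝ) (p : ℝ) : ℝ := sInf {t : ℝ | p ≤ F t}

/-- The quantile D curve `qD(p; Q) = 1 - Q(p/2)/Q(1 - p/2)`. -/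
noncomputable def qDcurve (Q : ℝ → ℝ) (p : ℝ) : ℝ := 1 - Q (p / 2) / Q (1 - p / 2)

/-- The empirical distribution function of the sample `X 0, …, X (n-1)`. -/

lemma quantile_nonneg {G : ℝ → ℝ} (hG0 : ∀ t ≤ (0:ℝ), G t = 0) {p : ℝ} (hp : 0 < p) :
    0 ≤ quantile G p := by
  apply Real.sInf_nonneg
  intro t ht
  by_contra h
  push_neg at h
  have h2 : G t = 0 := hG0 t h.le
  simp only [mem_setOf_eq, h2] at ht
  linarith

lemma bddBelow_quantile_set {G : ℝ → ℝ} (hG0 : ∀ t ≤ (0:ℝ), G t = 0) {p : ℝ} (hp : 0 < p) :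
    BddBelow {t : ℝ | p ≤ G t} := by
  refine ⟨0, fun t ht => ?_⟩
  by_contra h
  push_neg at h
  have h2 : G t = 0 := hG0 t h.le
  simp only [mem_setOf_eq, h2] at ht
  linarith

lemma quantile_tendsto (F : ℝ → ℝ) (G : ℕ → ℝ → ℝ)
    (hGmono : ∀ n, Monotone (G n))
    (hG0 : ∀ n, ∀ t ≤ (0:ℝ), G n t = 0)
    (hconv : ∀ r : ℚ, Tendsto (fun n => G n (r : ℝ)) atTop (𝓝 (F (r : ℝ))))
    (hFstrict : StrictMonoOn F (Set.Ioi (0:ℝ)))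
    {p x : ℝ} (hp : 0 < p) (hx : 0 < x) (hFx : F x = p) :
    Tendsto (fun n => quantile (G n) p) atTop (𝓝 x) := by
  rw [tendsto_order]
  constructor
  · intro a ha
    rcases lt_or_ge a 0 with ha0 | ha0
    · exact Eventually.of_forall fun n => ha0.trans_le (quantile_nonneg (hG0 n) hp)
    · obtain ⟨c, hac, hcx⟩ := exists_rat_btwn ha
      have hc0 : (0:ℝ) < c := ha0.trans_lt hac
      have hFc : F c < p := by
        rw [← hFx]; exact hFstrict hc0 hx hcx
      obtain ⟨r, hxr, hrx1⟩ := exists_rat_btwn (lt_add_one x)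
      have hFr : p < F r := by
        rw [← hFx]; exact hFstrict hx (hx.trans hxr) hxr
      filter_upwards [(hconv c).eventually (eventually_lt_nhds hFc),
        (hconv r).eventually (eventually_gt_nhds hFr)] with n h1 h2
      have hne : {t : ℝ | p ≤ G n t}.Nonempty := ⟨r, h2.le⟩
      have hle : (c:ℝ) ≤ quantile (G n) p := by
        apply le_csInf hne
        intro t ht
        by_contra h
        push_neg at h
        have h3 : G n t ≤ G n c := hGmono n h.le
        simp only [mem_setOf_eq] at ht
        linarith
      exact lt_of_lt_of_le hac hle
  · intro b hb
    obtain ⟨r, hxr, hrb⟩ := exists_rat_btwn hb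
    have hFr : p < F r := by
      rw [← hFx]; exact hFstrict hx (hx.trans hxr) hxr
    filter_upwards [(hconv r).eventually (eventually_gt_nhds hFr)] with n h2
    exact lt_of_le_of_lt (csInf_le (bddBelow_quantile_set (hG0 n) hp) h2.le) hrb

lemma quantile_spec {F : ℝ → ℝ} (hFcont : Continuous F) (hF0 : ∀ t ≤ (0:ℝ), F t = 0)
    (hFstrict : StrictMonoOn F (Set.Ioi (0:ℝ))) {q : ℝ} (hq : 0 < q)
    (hex : ∃ T, q < F T) : 0 < quantile F q ∧ F (quantile F q) = q := by
  obtain ⟨T, hT⟩ := hex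
  have hT0 : 0 < T := by
    by_contra h
    push_neg at h
    rw [hF0 T h] at hT
    linarith
  have h0 : F 0 = 0 := hF0 0 le_rfl
  have hmem : q ∈ Ioo (F 0) (F T) := by rw [h0]; exact ⟨hq, hT⟩
  obtain ⟨x, hx, hFx⟩ := intermediate_value_Ioo hT0.le hFcont.continuousOn hmem
  have hleast : IsLeast {t : ℝ | q ≤ F t} x := by
    constructor
    · exact le_of_eq hFx.symm
    · intro t ht
      by_contra h
      push_neg at h
      simp only [mem_setOf_eq] at ht
      have : F t < q := by
        rcases le_or_gt t 0 with h1 | h1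
        · rw [hF0 t h1]; exact hq
        · rw [← hFx]; exact hFstrict h1 hx.1 h
      linarith
  have heq : quantile F q = x := hleast.csInf_eq
  rw [heq]
  exact ⟨hx.1, hFx⟩

lemma quantile_monotoneOn {G : ℝ → ℝ} (hGmono : Monotone G) (hG0 : ∀ t ≤ (0:ℝ), G t = 0)
    (hone : ∃ t, 1 ≤ G t) : MonotoneOn (quantile G) (Icc (0:ℝ) 1) := by
  intro a ha b hb hab
  rcases eq_or_lt_of_le ha.1 with h0a | h0a
  · have hq0 : quantile G a = 0 := by
      have huniv : {t : ℝ | a ≤ G t} = univ := by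
        ext t
        simp only [mem_setOf_eq, mem_univ, iff_true]
        rw [← h0a]
        rcases le_or_gt t 0 with h | h
        · rw [hG0 t h]
        · rw [← hG0 0 le_rfl]; exact hGmono h.le
      rw [quantile, huniv]
      refine Real.sInf_of_not_bddBelow ?_
      rintro ⟨x, hx⟩
      have := hx (mem_univ (x - 1))
      linarith
    rcases eq_or_lt_of_le hb.1 with h0b | h0b
    · rw [show a = b from h0a.symm.trans h0b]
    · rw [hq0]
      exact quantile_nonneg hG0 h0b
  · obtain ⟨t0, ht0⟩ := hone
    apply csInf_le_csInf (bddBelow_quantile_set hG0 h0a)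
    · exact ⟨t0, le_trans hb.2 ht0⟩
    · exact fun t ht => le_trans hab ht

lemma main_det (F : ℝ → ℝ) (G : ℕ → ℝ → ℝ)
    (hGmono : ∀ n, Monotone (G n))
    (hG0 : ∀ n, ∀ t ≤ (0:ℝ), G n t = 0)
    (hGzero : ∀ t, G 0 t = 0)
    (hGone : ∀ n, 1 ≤ n → ∃ t, (1:ℝ) ≤ G n t)
    (hconv : ∀ r : ℚ, Tendsto (fun n => G n (r : ℝ)) atTop (𝓝 (F (r : ℝ))))
    (hFcont : Continuous F)
    (hF0 : ∀ t ≤ (0:ℝ), F t = 0)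
    (hFstrict : StrictMonoOn F (Set.Ioi (0:ℝ)))
    (hFtop : ∀ p : ℝ, p < 1 → ∃ T, p < F T) :
    Tendsto (fun n => ∫ p in (0:ℝ)..1, qDcurve (quantile (G n)) p) atTop
      (𝓝 (∫ p in (0:ℝ)..1, qDcurve (quantile F) p)) := by
  have hquant0 : ∀ q : ℝ, 0 < q → quantile (G 0) q = 0 := by
    intro q hq
    have hS : {t : ℝ | q ≤ G 0 t} = ∅ := by
      ext t
      simp only [mem_setOf_eq, mem_empty_iff_false, iff_false, not_le, hGzero t]
      exact hq
    rw [quantile, hS, Real.sInf_empty]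
  simp only [intervalIntegral.integral_of_le (zero_le_one' ℝ)]
  apply tendsto_integral_of_dominated_convergence (fun _ => (1:ℝ))
  · intro n
    rcases Nat.eq_zero_or_pos n with hn | hn
    · subst hn
      refine (aestronglyMeasurable_const (b := (1:ℝ))).congr ?_
      filter_upwards [ae_restrict_mem measurableSet_Ioc] with p hp
      have h1 : (0:ℝ) < p/2 := by linarith [hp.1]
      simp [qDcurve, hquant0 _ h1]
    · set Qc : ℝ → ℝ := fun q => quantile (G n) (min 1 (max 0 q)) with hQc
      have hQcmono : Monotone Qc := by
        intro a b hab
        exact quantile_monotoneOn (hGmono n) (hG0 n) (hGone n hn)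
          ⟨le_min zero_le_one (le_max_left 0 a), min_le_left _ _⟩
          ⟨le_min zero_le_one (le_max_left 0 b), min_le_left _ _⟩
          (min_le_min le_rfl (max_le_max le_rfl hab))
      have hmeas : Measurable fun p : ℝ => 1 - Qc (p/2) / Qc (1 - p/2) :=
        measurable_const.sub ((hQcmono.measurable.comp (measurable_id.div_const 2)).div
          (hQcmono.measurable.comp (measurable_const.sub (measurable_id.div_const 2))))
      refine hmeas.aestronglyMeasurable.congr ?_
      filter_upwards [ae_restrict_mem measurableSet_Ioc] with p hp
      have e1 : min 1 (max 0 (p/2)) = p/2 := by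
        rw [max_eq_right (by linarith [hp.1]), min_eq_right (by linarith [hp.2])]
      have e2 : min 1 (max 0 (1 - p/2)) = 1 - p/2 := by
        rw [max_eq_right (by linarith [hp.2]), min_eq_right (by linarith [hp.1])]
      simp only [qDcurve, Qc, e1, e2]
  · exact integrableOn_const measure_Ioc_lt_top.ne
  · intro n
    filter_upwards [ae_restrict_mem measurableSet_Ioc] with p hp
    obtain ⟨hp0, hp1⟩ := hp
    rcases Nat.eq_zero_or_pos n with hn | hn
    · subst hn
      have h1 : (0:ℝ) < p/2 := by linarith
      simp [qDcurve, hquant0 _ h1]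
    · have hq1 : (0:ℝ) < p/2 := by linarith
      have hq12 : p/2 ≤ 1 - p/2 := by linarith
      have hq2 : (0:ℝ) < 1 - p/2 := by linarith
      have hA : 0 ≤ quantile (G n) (p/2) := quantile_nonneg (hG0 n) hq1
      have hAB : quantile (G n) (p/2) ≤ quantile (G n) (1 - p/2) :=
        quantile_monotoneOn (hGmono n) (hG0 n) (hGone n hn)
          ⟨hq1.le, by linarith⟩ ⟨hq2.le, by linarith⟩ hq12
      rcases eq_or_lt_of_le (hA.trans hAB) with hB | hB
      · have hA0 : quantile (G n) (p/2) = 0 := le_antisymm (hAB.trans hB.ge) hA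
        rw [Real.norm_eq_abs]
        simp only [qDcurve, hA0, zero_div, sub_zero, abs_one, le_refl]
      · have hr0 : 0 ≤ quantile (G n) (p/2) / quantile (G n) (1 - p/2) :=
          div_nonneg hA hB.le
        have hr1 : quantile (G n) (p/2) / quantile (G n) (1 - p/2) ≤ 1 :=
          (div_le_one hB).2 hAB
        rw [Real.norm_eq_abs, abs_le]
        constructor <;> simp only [qDcurve] <;> linarith
  · filter_upwards [ae_restrict_mem measurableSet_Ioc] with p hp
    obtain ⟨hp0, hp1⟩ := hp
    obtain ⟨hx1, hFx1⟩ := quantile_spec hFcont hF0 hFstrict (by linarith : (0:ℝ) < p/2)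
      (hFtop _ (by linarith))
    obtain ⟨hx2, hFx2⟩ := quantile_spec hFcont hF0 hFstrict (by linarith : (0:ℝ) < 1 - p/2)
      (hFtop _ (by linarith))
    have h1 := quantile_tendsto F G hGmono hG0 hconv hFstrict (by linarith) hx1 hFx1
    have h2 := quantile_tendsto F G hGmono hG0 hconv hFstrict (by linarith) hx2 hFx2
    have hd : Tendsto (fun n => quantile (G n) (p/2) / quantile (G n) (1 - p/2)) atTop
        (𝓝 (quantile F (p/2) / quantile F (1 - p/2))) := h1.div h2 (ne_of_gt hx2)
    simpa [qDcurve] using hd.const_sub 1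

noncomputable def empCDF {Ω : Type*} (X : ℕ → Ω → ℝ) (n : ℕ) (ω : Ω) (t : ℝ) : ℝ :=
  (n : ℝ)⁻¹ * ∑ i ∈ Finset.range n, (if X i ω ≤ t then (1 : ℝ) else 0)

/-- The empirical plug-in estimator `q̂DIₙᴱ = ∫₀¹ (1 − Q̂ₙᴱ(p/2)/Q̂ₙᴱ(1−p/2)) dp` of the
quantile D index converges almost surely to `qDI(Q)`. -/
theorem qDI_empirical_as_convergence
{Ω : Type*} [MeasurableSpace Ω] (μ : Measure Ω) [IsProbabilityMeasure μ]
    (X : ℕ → Ω → ℝ) (hXmeas : ∀ i, Measurable (X i))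
    (hindep : ProbabilityTheory.iIndepFun X μ)
    (F : ℝ → ℝ)
    (hdist : ∀ i t, (μ {ω | X i ω ≤ t}).toReal = F t)
    (hFcont : Continuous F)
    (hF0 : ∀ t ≤ 0, F t = 0)
    (hF01 : ∀ t > 0, 0 < F t ∧ F t < 1)
    (hFstrict : StrictMonoOn F (Set.Ioi (0 : ℝ))) :
    ∀ᵐ ω ∂μ,
      Tendsto (fun n => ∫ p in (0 : ℝ)..1, qDcurve (quantile (empCDF X n ω)) p) atTop
        (nhds (∫ p in (0 : ℝ)..1, qDcurve (quantile F) p)) := by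
  -- F tends to 1 in the sense needed
  have hFtop : ∀ p : ℝ, p < 1 → ∃ T : ℝ, p < F T := by
    intro p hp
    by_contra h
    push_neg at h
    have hp0 : 0 ≤ p := by
      have := h 1
      rw [← hdist 0 1] at this
      exact le_trans ENNReal.toReal_nonneg this
    have hmono : Monotone fun n : ℕ => {ω | X 0 ω ≤ (n : ℝ)} := by
      intro m n hmn ω hω
      simp only [mem_setOf_eq] at hω ⊢
      exact le_trans hω (Nat.cast_le.2 hmn)
    have hU : ⋃ n : ℕ, {ω | X 0 ω ≤ (n : ℝ)} = univ := by
      ext ω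
      simp only [mem_iUnion, mem_setOf_eq, mem_univ, iff_true]
      exact exists_nat_ge (X 0 ω)
    have hlim := tendsto_measure_iUnion_atTop (μ := μ) (s := fun n : ℕ => {ω | X 0 ω ≤ (n : ℝ)}) hmono
    rw [hU, measure_univ] at hlim
    have hle : ∀ n : ℕ, μ {ω | X 0 ω ≤ (n : ℝ)} ≤ ENNReal.ofReal p := by
      intro n
      refine (ENNReal.le_ofReal_iff_toReal_le (measure_ne_top μ _) hp0).2 ?_
      rw [hdist 0 (n : ℝ)]
      exact h _
    have h1 := le_of_tendsto hlim (Eventually.of_forall hle)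
    exact absurd (h1.trans_lt (ENNReal.ofReal_lt_one.2 hp)) (lt_irrefl _)
  -- strong law at each rational
  have hslln : ∀ r : ℚ, ∀ᵐ ω ∂μ,
      Tendsto (fun n => empCDF X n ω (r : ℝ)) atTop (𝓝 (F (r : ℝ))) := by
    intro r
    set t : ℝ := (r : ℝ) with ht
    set g : ℝ → ℝ := fun x => if x ≤ t then 1 else 0 with hg
    have hgmeas : Measurable g :=
      Measurable.ite measurableSet_Iic measurable_const measurable_const
    set Y : ℕ → Ω → ℝ := fun i => g ∘ X i with hY
    have hYind : ∀ i, Y i = ({ω | X i ω ≤ t}).indicator (fun _ => (1 : ℝ)) := by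
      intro i
      funext ω
      simp only [hY, hg, Function.comp_apply, Set.indicator_apply, mem_setOf_eq]
    have hint : Integrable (Y 0) μ := by
      rw [hYind]
      exact (integrable_const (1 : ℝ)).indicator (measurableSet_le (hXmeas 0) measurable_const)
    have hident : ∀ i, ProbabilityTheory.IdentDistrib (X i) (X 0) μ μ := by
      intro i
      refine ⟨(hXmeas i).aemeasurable, (hXmeas 0).aemeasurable, ?_⟩
      haveI := Measure.isProbabilityMeasure_map (μ := μ) (hXmeas i).aemeasurable
      refine Measure.ext_of_Iic _ _ fun a => ?_
      rw [Measure.map_apply (hXmeas i) measurableSet_Iic,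
        Measure.map_apply (hXmeas 0) measurableSet_Iic]
      have h1 : (μ (X i ⁻¹' Iic a)).toReal = (μ (X 0 ⁻¹' Iic a)).toReal := by
        have e1 : X i ⁻¹' Iic a = {ω | X i ω ≤ a} := rfl
        have e2 : X 0 ⁻¹' Iic a = {ω | X 0 ω ≤ a} := rfl
        rw [e1, e2, hdist i a, hdist 0 a]
      exact (ENNReal.toReal_eq_toReal_iff' (measure_ne_top μ _) (measure_ne_top μ _)).1 h1
    have hmean : ∫ a, Y 0 a ∂μ = F t := by
      rw [hYind 0, MeasureTheory.integral_indicator_const (1 : ℝ) (measurableSet_le (hXmeas 0) measurable_const),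
        smul_eq_mul, mul_one]
      exact hdist 0 t
    have hsl := ProbabilityTheory.strong_law_ae_real Y hint
      (fun i j hij => (hindep.indepFun hij).comp hgmeas hgmeas)
      (fun i => (hident i).comp hgmeas)
    rw [hmean] at hsl
    filter_upwards [hsl] with ω hω
    have he : (fun n => empCDF X n ω t) = fun n => (∑ i ∈ Finset.range n, Y i ω) / n := by
      funext n
      simp only [empCDF, hY, hg, Function.comp_apply, div_eq_inv_mul]
    rw [he]
    exact hω
  -- positivity of the sample
  have hpos : ∀ᵐ ω ∂μ, ∀ i, 0 < X i ω := by
    rw [ae_all_iff]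
    intro i
    have h0 : μ {ω | X i ω ≤ 0} = 0 := by
      have h1 := hdist i 0
      rw [hF0 0 le_rfl] at h1
      exact (((ENNReal.toReal_eq_zero_iff _).1 h1).resolve_right (measure_ne_top μ _))
    rw [ae_iff]
    simpa [not_lt] using h0
  filter_upwards [ae_all_iff.2 hslln, hpos] with ω hω1 hω2
  apply main_det F (fun n => empCDF X n ω)
  · intro n s u hsu
    apply mul_le_mul_of_nonneg_left _ (inv_nonneg.2 (Nat.cast_nonneg n))
    apply Finset.sum_le_sum
    intro i _
    split_ifs with h1 h2
    · exact le_rfl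
    · exact absurd (h1.trans hsu) h2
    · exact zero_le_one
    · exact le_rfl
  · intro n u hu
    simp only [empCDF]
    rw [Finset.sum_eq_zero, mul_zero]
    intro i _
    rw [if_neg (not_le.2 (lt_of_le_of_lt hu (hω2 i)))]
  · intro u
    simp [empCDF]
  · intro n hn
    have hne : (Finset.range n).Nonempty := ⟨0, Finset.mem_range.2 hn⟩
    refine ⟨(Finset.range n).sup' hne (fun i => X i ω), ?_⟩
    simp only [empCDF]
    rw [Finset.sum_congr rfl (fun i hi => if_pos (Finset.le_sup' (fun i => X i ω) hi))]
    rw [Finset.sum_const, Finset.card_range, nsmul_eq_mul, mul_one,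
      inv_mul_cancel₀ (Nat.cast_ne_zero.2 (by omega))]
  · exact hω1
  · exact hFcont
  · exact hF0
  · exact hFstrict
  · exact hFtop
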